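/- arXiv:2008.10157 — 2 statements merged into one kernel-verified Lean document; each statement's English description precedes it below -/
import Mathlib

section
/- Under the Newton tracking primal–dual iteration, for every t ≥ 0 the iterates satisfy the identity ∇f(x^{t+1}) − ∇f(x*) + (I − 𝐖)^{1/2}(v^{t+1} − v*) + ε(x^{t+1} − x^t) + e^t = 0, where e^t := ∇f(x^t) − ∇f(x^{t+1}) + ∇²f(x^t)(x^{t+1} − x^t) − α(I − 𝐖)(x^{t+1} − x^t). -/
open Matrix Kronecker
open scoped InnerProductSpace

noncomputable section

/-- Local decision space `ℝ^p`. -/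
abbrev Ep (p : ℕ) : Type := EuclideanSpace ℝ (Fin p)

/-- Stacked space `ℝ^{np}`. -/
abbrev Vnp (n p : ℕ) : Type := EuclideanSpace ℝ (Fin n × Fin p)

/-- The `i`-th block `x_i ∈ ℝ^p` of a stacked vector `x ∈ ℝ^{np}`. -/
def blk {n p : ℕ} (x : Vnp n p) (i : Fin n) : Ep p := WithLp.toLp 2 (fun j => x (i, j))

/-- Aggregate objective `f(x) = ∑ i, f_i(x_i)`. -/
def aggF {n p : ℕ} (f : Fin n → Ep p → ℝ) (x : Vnp n p) : ℝ := ∑ i, f i (blk x i)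

/-- Stacked gradient `∇f(x) = [∇f_1(x_1); …; ∇f_n(x_n)]`. -/
def aggGrad {n p : ℕ} (g : Fin n → Ep p → Ep p) (x : Vnp n p) : Vnp n p :=
  WithLp.toLp 2 (fun ij : Fin n × Fin p => g ij.1 (blk x ij.1) ij.2)

/-- Block-diagonal Hessian `∇²f(x)` applied to `w`. -/
def aggHess {n p : ℕ} (h : Fin n → Ep p → (Ep p →L[ℝ] Ep p)) (x w : Vnp n p) : Vnp n p :=
  WithLp.toLp 2 (fun ij : Fin n × Fin p => h ij.1 (blk x ij.1) (blk w ij.1) ij.2)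

/-- `𝐖 = W ⊗ I_p`. -/
def bigW {n : ℕ} (p : ℕ) (W : Matrix (Fin n) (Fin n) ℝ) :
    Matrix (Fin n × Fin p) (Fin n × Fin p) ℝ :=
  W ⊗ₖ (1 : Matrix (Fin p) (Fin p) ℝ)

/-- `I − 𝐖`. -/
def IWmat {n : ℕ} (p : ℕ) (W : Matrix (Fin n) (Fin n) ℝ) :
    Matrix (Fin n × Fin p) (Fin n × Fin p) ℝ :=
  1 - bigW p W

section OldSqrt
open scoped ComplexOrder

/-- Square root of a positive semidefinite matrix, as defined in Mathlib (Dec 2024). -/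
def Matrix.PosSemidef.sqrt {𝕜 : Type*} [RCLike 𝕜] {m : Type*} [Fintype m] [DecidableEq m]
    {A : Matrix m m 𝕜} (hA : A.PosSemidef) : Matrix m m 𝕜 :=
  hA.1.eigenvectorUnitary.1 * diagonal ((↑) ∘ (√·) ∘ hA.1.eigenvalues) *
    (star hA.1.eigenvectorUnitary : Matrix m m 𝕜)

end OldSqrt

/-! The identity is linear algebra on a single step. Applying `(I − 𝐖)^{1/2}` to the dual update and
using `((I − 𝐖)^{1/2})² = I − 𝐖` gives `(I − 𝐖)^{1/2} v^{t+1} = (I − 𝐖)^{1/2} v^t + α(I − 𝐖)x^{t+1}`;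
the optimality condition replaces `(I − 𝐖)^{1/2} v*` by `−∇f(x*)`, and the Newton step replaces
`∇²f(x^t)(x^{t+1} − x^t)`. The error term `e^t` is exactly what makes the remaining terms cancel. -/

open scoped ComplexOrder in
theorem Matrix.PosSemidef.sqrt_mul_sqrt {𝕜 : Type*} [RCLike 𝕜] {m : Type*} [Fintype m]
    [DecidableEq m] {A : Matrix m m 𝕜} (hA : A.PosSemidef) : hA.sqrt * hA.sqrt = A := by
  unfold Matrix.PosSemidef.sqrt
  conv_rhs => rw [hA.1.spectral_theorem, Unitary.conjStarAlgAut_apply]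
  have hU : (star hA.1.eigenvectorUnitary : Matrix m m 𝕜) * hA.1.eigenvectorUnitary.1 = 1 :=
    Unitary.coe_star_mul_self _
  rw [show ∀ a b c d e f : Matrix m m 𝕜, a * b * c * (d * e * f) = a * (b * (c * d) * e) * f by
    intros; simp only [mul_assoc], hU, mul_one, diagonal_mul_diagonal]
  congr 3
  funext i
  simp only [Function.comp_apply, ← RCLike.ofReal_mul, Real.mul_self_sqrt (hA.eigenvalues_nonneg i)]

open scoped ComplexOrder in
theorem Matrix.PosSemidef.toEuclideanLin_sqrt_sqrt {𝕜 : Type*} [RCLike 𝕜] {m : Type*}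
    [Fintype m] [DecidableEq m] {A : Matrix m m 𝕜} (hA : A.PosSemidef) (y : EuclideanSpace 𝕜 m) :
    toEuclideanLin hA.sqrt (toEuclideanLin hA.sqrt y) = toEuclideanLin A y := by
  simp only [toLpLin_apply, mulVec_mulVec, hA.sqrt_mul_sqrt]

theorem blk_neg {n p : ℕ} (x : Vnp n p) (i : Fin n) : blk (-x) i = -blk x i := rfl

theorem aggHess_neg {n p : ℕ} (h : Fin n → Ep p → (Ep p →L[ℝ] Ep p)) (x w : Vnp n p) :
    aggHess h x (-w) = -aggHess h x w := by
  ext ij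
  simp only [aggHess, blk_neg, map_neg]
  rfl

theorem newton_tracking_error_identity_general
    {n p : ℕ}
    (W : Matrix (Fin n) (Fin n) ℝ)
    (hpsd : (IWmat p W).PosSemidef)
    (g : Fin n → Ep p → Ep p)
    (h : Fin n → Ep p → (Ep p →L[ℝ] Ep p))
    (α ε : ℝ)
    (x v : ℕ → Vnp n p)
    (hprimal : ∀ t, aggHess h (x t) (x t - x (t + 1)) + ε • (x t - x (t + 1)) =
      aggGrad g (x t) + Matrix.toEuclideanLin hpsd.sqrt (v t)
        + α • Matrix.toEuclideanLin (IWmat p W) (x t))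
    (hdual : ∀ t, v (t + 1) = v t + α • Matrix.toEuclideanLin hpsd.sqrt (x (t + 1)))
    (xs vs : Vnp n p)
    (hK1 : aggGrad g xs + Matrix.toEuclideanLin hpsd.sqrt vs = 0) :
    ∀ t : ℕ,
      aggGrad g (x (t + 1)) - aggGrad g xs
        + Matrix.toEuclideanLin hpsd.sqrt (v (t + 1) - vs)
        + ε • (x (t + 1) - x t)
        + (aggGrad g (x t) - aggGrad g (x (t + 1))
            + aggHess h (x t) (x (t + 1) - x t)
            - α • Matrix.toEuclideanLin (IWmat p W) (x (t + 1) - x t)) = 0 := by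
  intro t
  set S := toEuclideanLin hpsd.sqrt
  set M := toEuclideanLin (IWmat p W)
  have hSdual : S (v (t + 1)) = S (v t) + α • M (x (t + 1)) := by
    rw [hdual t, map_add, map_smul, hpsd.toEuclideanLin_sqrt_sqrt]
  have hHess : aggHess h (x t) (x (t + 1) - x t) = -aggHess h (x t) (x t - x (t + 1)) := by
    rw [← aggHess_neg, neg_sub]
  rw [map_sub, hSdual, hHess, map_sub]
  linear_combination (norm := module) -hK1 - hprimal t

theorem newton_tracking_error_identity
    {n p : ℕ} (hn : 0 < n) (hp : 0 < p)
    (W : Matrix (Fin n) (Fin n) ℝ)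
    (hWnonneg : ∀ i j, 0 ≤ W i j) (hWsymm : W.IsSymm)
    (hWstoch : W *ᵥ (fun _ => (1 : ℝ)) = fun _ => 1)
    (hWker : ∀ y : Fin n → ℝ, (1 - W) *ᵥ y = 0 ↔ ∃ c : ℝ, y = fun _ => c)
    (hpsd : (IWmat p W).PosSemidef)
    (f : Fin n → Ep p → ℝ) (g : Fin n → Ep p → Ep p)
    (h : Fin n → Ep p → (Ep p →L[ℝ] Ep p))
    (μf Lf : ℝ) (hμpos : 0 < μf) (hμL : μf ≤ Lf)
    (hC2 : ∀ i, ContDiff ℝ 2 (f i))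
    (hg : ∀ i z, HasGradientAt (f i) (g i z) z)
    (hh : ∀ i z, HasFDerivAt (g i) (h i z) z)
    (hlow : ∀ i z w, μf * ‖w‖ ^ 2 ≤ ⟪(h i z) w, w⟫_ℝ)
    (hup : ∀ i z w, ⟪(h i z) w, w⟫_ℝ ≤ Lf * ‖w‖ ^ 2)
    (α ε : ℝ) (hα : 0 < α) (hε : 0 < ε)
    (x v : ℕ → Vnp n p)
    (hprimal : ∀ t, aggHess h (x t) (x t - x (t + 1)) + ε • (x t - x (t + 1)) =
      aggGrad g (x t) + Matrix.toEuclideanLin hpsd.sqrt (v t)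
        + α • Matrix.toEuclideanLin (IWmat p W) (x t))
    (hdual : ∀ t, v (t + 1) = v t + α • Matrix.toEuclideanLin hpsd.sqrt (x (t + 1)))
    (xs vs : Vnp n p)
    (hK1 : aggGrad g xs + Matrix.toEuclideanLin hpsd.sqrt vs = 0)
    (hK2 : Matrix.toEuclideanLin hpsd.sqrt xs = 0) :
    ∀ t : ℕ,
      aggGrad g (x (t + 1)) - aggGrad g xs
        + Matrix.toEuclideanLin hpsd.sqrt (v (t + 1) - vs)
        + ε • (x (t + 1) - x t)
        + (aggGrad g (x t) - aggGrad g (x (t + 1))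
            + aggHess h (x t) (x (t + 1) - x t)
            - α • Matrix.toEuclideanLin (IWmat p W) (x (t + 1) - x t)) = 0 :=
  newton_tracking_error_identity_general W hpsd g h α ε x v hprimal hdual xs vs hK1
end
end

section
/- Consider local sequences x_i^t, u_i^t ∈ ℝ^p (i = 1,…,n, t ≥ 0) satisfying the Newton tracking update (∇²f_i(x_i^{t+1}) + εI_p)·u_i^{t+1} = (∇²f_i(x_i^t) + εI_p)·u_i^t + ∇f_i(x_i^{t+1}) − ∇f_i(x_i^t) + 2α(x_i^{t+1} − ∑_{j} w_{ij} x_j^{t+1}) − α(x_i^t − ∑_{j} w_{ij} x_j^t). If the initialization satisfies ∑_{i=1}^n (∇²f_i(x_i^0) + εI_p)·u_i^0 = ∑_{i=1}^n ∇f_i(x_i^0), then for every t ≥ 0 it holds that ∑_{i=1}^n (∇²f_i(x_i^t) + εI_p)·u_i^t = ∑_{i=1}^n ∇f_i(x_i^t). -/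
open Matrix Kronecker
open scoped InnerProductSpace

noncomputable section

/-!
Summing the update over the agents, the consensus terms `x_i - ∑ j, w_ij x_j` cancel because
the columns of `W` sum to one. Hence `∑ i, (∇²f_i(x_i^t) + εI) u_i^t - ∑ i, ∇f_i(x_i^t)` does not
depend on `t`, and it vanishes at `t = 0`.
-/

namespace Matrix

variable {ι R : Type*} [Fintype ι]

theorem IsSymm.sum_apply_left_eq_one [NonAssocSemiring R] {W : Matrix ι ι R} (hW : W.IsSymm)
    (hstoch : W *ᵥ (fun _ => (1 : R)) = fun _ => 1) (j : ι) : ∑ i, W i j = 1 := by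
  simpa [mulVec, dotProduct, ← hW.apply j] using congrFun hstoch j

theorem sum_sub_sum_smul_eq_zero [Ring R] {E : Type*} [AddCommGroup E] [Module R E]
    {W : Matrix ι ι R} (hcol : ∀ j, ∑ i, W i j = 1) (x : ι → E) :
    ∑ i, (x i - ∑ j, W i j • x j) = 0 := by
  rw [Finset.sum_sub_distrib, Finset.sum_comm, sub_eq_zero]
  exact Finset.sum_congr rfl fun j _ => by rw [← Finset.sum_smul, hcol j, one_smul]

end Matrix

theorem sum_tracking_update {ι R E : Type*} [Fintype ι] [Ring R] [AddCommGroup E] [Module R E]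
    {W : Matrix ι ι R} (hcol : ∀ j, ∑ i, W i j = 1) (a b : R) {y y' d d' x x' : ι → E}
    (hupd : ∀ i, y' i = y i + d' i - d i + a • (x' i - ∑ j, W i j • x' j)
      - b • (x i - ∑ j, W i j • x j)) :
    ∑ i, y' i = ∑ i, y i + ∑ i, d' i - ∑ i, d i := by
  rw [Finset.sum_congr rfl fun i _ => hupd i]
  simp only [Finset.sum_sub_distrib, Finset.sum_add_distrib]
  rw [← Finset.smul_sum, ← Finset.smul_sum, Matrix.sum_sub_sum_smul_eq_zero hcol,
    Matrix.sum_sub_sum_smul_eq_zero hcol, smul_zero, smul_zero, add_zero, sub_zero]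

theorem newton_tracking_direction_conservation_general
    {n p : ℕ}
    (W : Matrix (Fin n) (Fin n) ℝ)
    (hWsymm : W.IsSymm)
    (hWstoch : W *ᵥ (fun _ => (1 : ℝ)) = fun _ => 1)
    (g : Fin n → Ep p → Ep p)
    (h : Fin n → Ep p → (Ep p →L[ℝ] Ep p))
    (α ε : ℝ)
    (xl u : ℕ → Fin n → Ep p)
    (hupd : ∀ t (i : Fin n),
      (h i (xl (t + 1) i)) (u (t + 1) i) + ε • u (t + 1) i =
        (h i (xl t i)) (u t i) + ε • u t i
          + g i (xl (t + 1) i) - g i (xl t i)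
          + (2 * α) • (xl (t + 1) i - ∑ j, W i j • xl (t + 1) j)
          - α • (xl t i - ∑ j, W i j • xl t j))
    (hinit : ∑ i, ((h i (xl 0 i)) (u 0 i) + ε • u 0 i) = ∑ i, g i (xl 0 i)) :
    ∀ t, ∑ i, ((h i (xl t i)) (u t i) + ε • u t i) = ∑ i, g i (xl t i) := by
  intro t
  induction t with
  | zero => exact hinit
  | succ t ih =>
    rw [sum_tracking_update (hWsymm.sum_apply_left_eq_one hWstoch) (2 * α) α (hupd t), ih]
    abel

/-- If `∑ i (∇²f_i(x_i⁰)+εI)u_i⁰ = ∑ i ∇f_i(x_i⁰)`, then the Newton tracking update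
preserves `∑ i (∇²f_i(x_i^t)+εI)u_i^t = ∑ i ∇f_i(x_i^t)` for all `t`. -/
theorem newton_tracking_direction_conservation
    {n p : ℕ} (hn : 0 < n) (hp : 0 < p)
    (W : Matrix (Fin n) (Fin n) ℝ)
    (hWnonneg : ∀ i j, 0 ≤ W i j) (hWsymm : W.IsSymm)
    (hWstoch : W *ᵥ (fun _ => (1 : ℝ)) = fun _ => 1)
    (f : Fin n → Ep p → ℝ) (g : Fin n → Ep p → Ep p)
    (h : Fin n → Ep p → (Ep p →L[ℝ] Ep p))
    (hC2 : ∀ i, ContDiff ℝ 2 (f i))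
    (hg : ∀ i z, HasGradientAt (f i) (g i z) z)
    (hh : ∀ i z, HasFDerivAt (g i) (h i z) z)
    (α ε : ℝ) (hα : 0 < α) (hε : 0 < ε)
    (xl u : ℕ → Fin n → Ep p)
    (hupd : ∀ t (i : Fin n),
      (h i (xl (t + 1) i)) (u (t + 1) i) + ε • u (t + 1) i =
        (h i (xl t i)) (u t i) + ε • u t i
          + g i (xl (t + 1) i) - g i (xl t i)
          + (2 * α) • (xl (t + 1) i - ∑ j, W i j • xl (t + 1) j)
          - α • (xl t i - ∑ j, W i j • xl t j))
    (hinit : ∑ i, ((h i (xl 0 i)) (u 0 i) + ε • u 0 i) = ∑ i, g i (xl 0 i)) :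
    ∀ t, ∑ i, ((h i (xl t i)) (u t i) + ε • u t i) = ∑ i, g i (xl t i) :=
  newton_tracking_direction_conservation_general W hWsymm hWstoch g h α ε xl u hupd hinit
end
end
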